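/- Fix an integer t ≥ 0 and an interior state s with 0 < s < L and s − s0 + t even, and set r = (s − s0 + t)/2. The number of paths w : {0,…,t−1} → {−1,+1} whose positions X_k = s0 + w(0) + ⋯ + w(k−1) satisfy 0 < X_k < L for all 0 ≤ k ≤ t and X_t = s equals Σ_{k∈ℤ} [C(t, r+kL) − C(t, r+s0+kL)]. -/

import Mathlib

/-- Binomial coefficient `C(n,k)` with integer lower index `k`, equal to `0`
unless `0 ≤ k ≤ n`. -/
def Cb (n : ℕ) (k : ℤ) : ℤ := if 0 ≤ k ∧ k ≤ (n : ℤ) then (n.choose k.toNat : ℤ) else 0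

/-- The position after `k` steps of a ±1 path `w` of length `t` started at `s0`. -/
def pathPos (s0 : ℤ) {t : ℕ} (w : Fin t → ℤ) (k : ℕ) : ℤ :=
  s0 + ∑ i ∈ Finset.range k, if h : i < t then w ⟨i, h⟩ else 0

lemma Cb_eq_zero {n : ℕ} {k : ℤ} (h : ¬ (0 ≤ k ∧ k ≤ (n:ℤ))) : Cb n k = 0 := by
  rw [Cb, if_neg h]

lemma Cb_of_nonneg {n : ℕ} {k : ℤ} (h : 0 ≤ k) : Cb n k = (n.choose k.toNat : ℤ) := by
  rw [Cb]
  split_ifs with h'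
  · rfl
  · rw [Nat.choose_eq_zero_of_lt] <;> [simp; omega]

lemma Cb_pascal (n : ℕ) (k : ℤ) : Cb (n+1) k = Cb n k + Cb n (k-1) := by
  rcases lt_or_ge k 0 with h | h
  · rw [Cb_eq_zero (by omega), Cb_eq_zero (by omega), Cb_eq_zero (by omega)]; ring
  rcases eq_or_lt_of_le h with h0 | h1
  · rw [Cb_of_nonneg h, Cb_of_nonneg h, Cb_eq_zero (by omega), ← h0]
    simp
  · rw [Cb_of_nonneg h, Cb_of_nonneg (by omega), Cb_of_nonneg (by omega)]
    have : k.toNat = (k-1).toNat + 1 := by omega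
    rw [this, Nat.choose_succ_succ']
    push_cast; ring

lemma Cb_symm (n : ℕ) (k : ℤ) : Cb n k = Cb n ((n:ℤ) - k) := by
  rcases Decidable.em (0 ≤ k ∧ k ≤ (n:ℤ)) with h | h
  · rw [Cb_of_nonneg h.1, Cb_of_nonneg (by omega)]
    have h1 : ((n:ℤ) - k).toNat = n - k.toNat := by omega
    rw [h1, Nat.choose_symm (by omega)]
  · rw [Cb_eq_zero h, Cb_eq_zero (by omega)]

lemma Cb_zero (k : ℤ) : Cb 0 k = if k = 0 then 1 else 0 := by
  rcases eq_or_ne k 0 with rfl | h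
  · simp [Cb]
  · rw [Cb_eq_zero (by omega), if_neg h]

/-- Both method-of-image terms vanish for `|k| ≥ t+2`, given mild bounds on `r`. -/
lemma both_vanish (L : ℕ) (hL : 2 ≤ L) (s0 : ℤ) (hs0 : 0 < s0) (hs0L : s0 < (L:ℤ))
    (t : ℕ) (r k : ℤ) (hlo : (t:ℤ) - 2*L + 2 ≤ 2*r) (hhi : 2*r ≤ (t:ℤ) + 2*L - 2)
    (hk : (t:ℤ) + 2 ≤ |k|) :
    Cb t (r + k * L) = 0 ∧ Cb t (r + s0 + k * L) = 0 := by
  have hL' : (2:ℤ) ≤ L := by exact_mod_cast hL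
  have htL : 2 * (t:ℤ) ≤ (t:ℤ) * L := by nlinarith [Int.natCast_nonneg t]
  rcases abs_le.mp (le_refl |k|) with _
  rcases le_or_gt ((t:ℤ) + 2) k with hk1 | hk1
  · have hkL : ((t:ℤ) + 2) * L ≤ k * L := by
      apply mul_le_mul_of_nonneg_right hk1 (by positivity)
    constructor <;> apply Cb_eq_zero <;> rintro ⟨h1, h2⟩ <;> nlinarith
  · have hk2 : k ≤ -((t:ℤ) + 2) := by rcases abs_cases k with ⟨h, _⟩ | ⟨h, _⟩ <;> omega
    have hkL : k * L ≤ (-((t:ℤ) + 2)) * L := by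
      apply mul_le_mul_of_nonneg_right hk2 (by positivity)
    constructor <;> apply Cb_eq_zero <;> rintro ⟨h1, h2⟩ <;> nlinarith

/-- Method-of-images sum, as a finite sum. -/
noncomputable def G (L : ℕ) (s0 : ℤ) (t : ℕ) (r : ℤ) : ℤ :=
  ∑ k ∈ Finset.Icc (-(t:ℤ)-1) ((t:ℤ)+1), (Cb t (r + k * L) - Cb t (r + s0 + k * L))

lemma G_pascal (L : ℕ) (hL : 2 ≤ L) (s0 : ℤ) (hs0 : 0 < s0) (hs0L : s0 < (L:ℤ))
    (t : ℕ) (r : ℤ) (h1 : (t:ℤ) + 3 - L ≤ 2*r) (h2 : 2*r ≤ (t:ℤ) + L - 1) :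
    G L s0 (t+1) r = G L s0 t r + G L s0 t (r-1) := by
  have hL' : (2:ℤ) ≤ L := by exact_mod_cast hL
  have hbig : ∀ r' : ℤ, (t:ℤ) - 2*L + 2 ≤ 2*r' → 2*r' ≤ (t:ℤ) + 2*L - 2 →
      (∑ k ∈ Finset.Icc (-(t:ℤ)-1-1) ((t:ℤ)+1+1), (Cb t (r' + k * L) - Cb t (r' + s0 + k * L)))
      = G L s0 t r' := by
    intro r' hlo hhi
    refine (Finset.sum_subset (Finset.Icc_subset_Icc (by omega) (by omega)) ?_).symm
    intro k hk hk'
    simp only [Finset.mem_Icc] at hk hk'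
    have hv := both_vanish L hL s0 hs0 hs0L t r' k hlo hhi
      (by rcases abs_cases k with ⟨h, _⟩ | ⟨h, _⟩ <;> omega)
    rw [hv.1, hv.2]; ring
  have hG1 : G L s0 (t+1) r =
      ∑ k ∈ Finset.Icc (-(t:ℤ)-1-1) ((t:ℤ)+1+1),
        ((Cb t (r + k * L) - Cb t (r + s0 + k * L))
          + (Cb t ((r-1) + k * L) - Cb t ((r-1) + s0 + k * L))) := by
    rw [G, show (-(((t:ℕ)+1:ℕ):ℤ)-1) = -(t:ℤ)-1-1 by push_cast; ring,
      show ((((t:ℕ)+1:ℕ):ℤ)+1) = (t:ℤ)+1+1 by push_cast; ring]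
    refine Finset.sum_congr rfl fun k _ => ?_
    rw [Cb_pascal, Cb_pascal]
    ring_nf
  rw [hG1, Finset.sum_add_distrib, hbig r (by omega) (by omega),
    hbig (r-1) (by omega) (by omega)]

lemma G_reflect0 (L : ℕ) (hL : 2 ≤ L) (s0 : ℤ) (hs0 : 0 < s0) (hs0L : s0 < (L:ℤ))
    (t : ℕ) (r : ℤ) (h : 2*r = (t:ℤ) - s0) : G L s0 t r = 0 := by
  rw [G, Finset.sum_sub_distrib, sub_eq_zero]
  refine Finset.sum_nbij' (fun k => -k) (fun k => -k) ?_ ?_ ?_ ?_ ?_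
  · intro k hk; simp only [Finset.mem_Icc] at *; omega
  · intro k hk; simp only [Finset.mem_Icc] at *; omega
  · intro k _; ring
  · intro k _; ring
  · intro k _
    rw [Cb_symm t (r + k * L)]
    congr 1; ring_nf; omega

lemma G_reflectL (L : ℕ) (hL : 2 ≤ L) (s0 : ℤ) (hs0 : 0 < s0) (hs0L : s0 < (L:ℤ))
    (t : ℕ) (r : ℤ) (h : 2*r = (t:ℤ) + L - s0) : G L s0 t r = 0 := by
  have hL' : (2:ℤ) ≤ L := by exact_mod_cast hL
  have hext : ∀ f : ℤ → ℤ, (∀ k ∈ Finset.Icc (-(t:ℤ)-2) ((t:ℤ)+1), k ∉ Finset.Icc (-(t:ℤ)-1) ((t:ℤ)+1) → f k = 0) →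
      ∑ k ∈ Finset.Icc (-(t:ℤ)-1) ((t:ℤ)+1), f k = ∑ k ∈ Finset.Icc (-(t:ℤ)-2) ((t:ℤ)+1), f k :=
    fun f hf => Finset.sum_subset (Finset.Icc_subset_Icc (by omega) (by omega)) hf
  have hvan : ∀ k, k ∈ Finset.Icc (-(t:ℤ)-2) ((t:ℤ)+1) → k ∉ Finset.Icc (-(t:ℤ)-1) ((t:ℤ)+1) →
      Cb t (r + k * L) = 0 ∧ Cb t (r + s0 + k * L) = 0 := by
    intro k hk hk'
    simp only [Finset.mem_Icc] at hk hk'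
    exact both_vanish L hL s0 hs0 hs0L t r k (by omega) (by omega)
      (by rcases abs_cases k with ⟨h', _⟩ | ⟨h', _⟩ <;> omega)
  rw [G, Finset.sum_sub_distrib, sub_eq_zero,
    hext _ (fun k hk hk' => (hvan k hk hk').1), hext _ (fun k hk hk' => (hvan k hk hk').2)]
  refine Finset.sum_nbij' (fun k => -1-k) (fun k => -1-k) ?_ ?_ ?_ ?_ ?_
  · intro k hk; simp only [Finset.mem_Icc] at *; omega
  · intro k hk; simp only [Finset.mem_Icc] at *; omega
  · intro k _; ring
  · intro k _; ring
  · intro k _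
    rw [Cb_symm t (r + k * L)]
    congr 1; ring_nf; omega

/-- The set of admissible paths. -/
def Spaths (L : ℕ) (s0 : ℤ) (t : ℕ) (s : ℤ) : Set (Fin t → ℤ) :=
  {w | (∀ i, w i = 1 ∨ w i = -1) ∧
    (∀ k ≤ t, 0 < pathPos s0 w k ∧ pathPos s0 w k < (L : ℤ)) ∧
    pathPos s0 w t = s}

lemma Spaths_finite (L : ℕ) (s0 : ℤ) (t : ℕ) (s : ℤ) : (Spaths L s0 t s).Finite := by
  apply Set.Finite.subset (Set.Finite.pi (t := fun _ : Fin t => ({1, -1} : Set ℤ))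
    (fun _ => (Set.finite_singleton _).insert _))
  intro w hw
  simp only [Set.mem_pi, Set.mem_univ, Set.mem_insert_iff, Set.mem_singleton_iff]
  exact fun i _ => hw.1 i

lemma pathPos_succ (s0 : ℤ) {t : ℕ} (w : Fin t → ℤ) {k : ℕ} (hk : k < t) :
    pathPos s0 w (k+1) = pathPos s0 w k + w ⟨k, hk⟩ := by
  unfold pathPos
  rw [Finset.sum_range_succ, dif_pos hk]
  ring

lemma pathPos_snoc (s0 : ℤ) {t : ℕ} (v : Fin t → ℤ) (x : ℤ) {k : ℕ} (hk : k ≤ t) :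
    pathPos s0 (Fin.snoc v x) k = pathPos s0 v k := by
  unfold pathPos
  congr 1
  apply Finset.sum_congr rfl
  intro i hi
  simp only [Finset.mem_range] at hi
  have hit : i < t := lt_of_lt_of_le hi hk
  rw [dif_pos (by omega : i < t + 1), dif_pos hit]
  have hcast : (⟨i, by omega⟩ : Fin (t+1)) = Fin.castSucc ⟨i, hit⟩ := rfl
  rw [hcast, Fin.snoc_castSucc]

def cnt (L : ℕ) (s0 : ℤ) : ℕ → ℤ → ℤ
  | 0, s => if s = s0 then 1 else 0
  | t+1, s => if 0 < s ∧ s < (L:ℤ) then cnt L s0 t (s-1) + cnt L s0 t (s+1) else 0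

lemma ncard_Spaths (L : ℕ) (s0 : ℤ) (hs0 : 0 < s0) (hs0L : s0 < (L:ℤ)) :
    ∀ (t : ℕ) (s : ℤ), ((Spaths L s0 t s).ncard : ℤ) = cnt L s0 t s := by
  intro t
  induction t with
  | zero =>
    intro s
    have hpp : ∀ w : Fin 0 → ℤ, pathPos s0 w 0 = s0 := by
      intro w; simp [pathPos]
    rcases eq_or_ne s s0 with h | h
    · rw [cnt, if_pos h]
      have : Spaths L s0 0 s = Set.univ := by
        ext w
        simp only [Spaths, Set.mem_setOf_eq, Set.mem_univ, iff_true, Nat.le_zero]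
        refine ⟨fun i => i.elim0, ?_, by rw [hpp]; exact h.symm⟩
        rintro k rfl
        rw [hpp]; exact ⟨hs0, hs0L⟩
      rw [this, Set.ncard_univ, Nat.card_unique]
      simp
    · rw [cnt, if_neg h]
      have : Spaths L s0 0 s = ∅ := by
        ext w
        simp only [Spaths, Set.mem_setOf_eq, Set.mem_empty_iff_false, iff_false, hpp]
        rintro ⟨-, -, h3⟩
        exact h h3.symm
      rw [this]; simp
  | succ t ih =>
    intro s
    by_cases hs : 0 < s ∧ s < (L:ℤ)
    · have hinit : ∀ (w : Fin (t+1) → ℤ) (k : ℕ), k ≤ t →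
          pathPos s0 (Fin.init w) k = pathPos s0 w k := by
        intro w k hk
        conv_rhs => rw [← Fin.snoc_init_self w]
        rw [pathPos_snoc s0 _ _ hk]
      have hstep : ∀ w : Fin (t+1) → ℤ,
          pathPos s0 w (t+1) = pathPos s0 (Fin.init w) t + w (Fin.last t) := by
        intro w
        rw [pathPos_succ s0 w (Nat.lt_succ_self t), hinit w t le_rfl]
        rfl
      have key : Set.BijOn (Fin.init : (Fin (t+1) → ℤ) → Fin t → ℤ)
          (Spaths L s0 (t+1) s) (Spaths L s0 t (s-1) ∪ Spaths L s0 t (s+1)) := by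
        refine ⟨?_, ?_, ?_⟩
        · rintro w ⟨h1, h2, h3⟩
          have hl := h1 (Fin.last t)
          have hend : pathPos s0 (Fin.init w) t + w (Fin.last t) = s := by
            rw [← hstep w]; exact h3
          have hmem : ∀ u, pathPos s0 (Fin.init w) t = u →
              Fin.init w ∈ Spaths L s0 t u := by
            intro u hu
            exact ⟨fun i => h1 _, fun k hk => (hinit w k hk) ▸ h2 k (by omega), hu⟩
          rcases hl with hx | hx
          · exact Or.inl (hmem (s-1) (by omega))
          · exact Or.inr (hmem (s+1) (by omega))
        · rintro w ⟨h1, h2, h3⟩ w' ⟨h1', h2', h3'⟩ heq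
          have hlast : w (Fin.last t) = w' (Fin.last t) := by
            have e1 := hstep w
            have e2 := hstep w'
            rw [h3] at e1; rw [h3'] at e2
            rw [heq] at e1
            omega
          funext i
          induction i using Fin.lastCases with
          | last => exact hlast
          | cast i => exact congrFun heq i
        · rintro v (⟨h1, h2, h3⟩ | ⟨h1, h2, h3⟩)
          · refine ⟨Fin.snoc v 1, ⟨?_, ?_, ?_⟩, by simp⟩
            · intro i
              induction i using Fin.lastCases with
              | last => left; simp
              | cast i => rw [Fin.snoc_castSucc]; exact h1 i
            · intro k hk
              rcases Nat.lt_succ_iff_lt_or_eq.mp (Nat.lt_succ_of_le hk) with hk' | rfl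
              · rw [pathPos_snoc s0 v 1 (by omega)]; exact h2 k (by omega)
              · rw [pathPos_succ s0 _ (Nat.lt_succ_self t),
                  show (⟨t, Nat.lt_succ_self t⟩ : Fin (t+1)) = Fin.last t from rfl,
                  Fin.snoc_last, pathPos_snoc s0 v 1 le_rfl, h3]
                omega
            · rw [pathPos_succ s0 _ (Nat.lt_succ_self t),
                show (⟨t, Nat.lt_succ_self t⟩ : Fin (t+1)) = Fin.last t from rfl,
                Fin.snoc_last, pathPos_snoc s0 v 1 le_rfl, h3]
              ring
          · refine ⟨Fin.snoc v (-1), ⟨?_, ?_, ?_⟩, by simp⟩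
            · intro i
              induction i using Fin.lastCases with
              | last => right; simp
              | cast i => rw [Fin.snoc_castSucc]; exact h1 i
            · intro k hk
              rcases Nat.lt_succ_iff_lt_or_eq.mp (Nat.lt_succ_of_le hk) with hk' | rfl
              · rw [pathPos_snoc s0 v (-1) (by omega)]; exact h2 k (by omega)
              · rw [pathPos_succ s0 _ (Nat.lt_succ_self t),
                  show (⟨t, Nat.lt_succ_self t⟩ : Fin (t+1)) = Fin.last t from rfl,
                  Fin.snoc_last, pathPos_snoc s0 v (-1) le_rfl, h3]
                omega
            · rw [pathPos_succ s0 _ (Nat.lt_succ_self t),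
                show (⟨t, Nat.lt_succ_self t⟩ : Fin (t+1)) = Fin.last t from rfl,
                Fin.snoc_last, pathPos_snoc s0 v (-1) le_rfl, h3]
              ring
      have hdisj : Disjoint (Spaths L s0 t (s-1)) (Spaths L s0 t (s+1)) := by
        rw [Set.disjoint_left]
        rintro v ⟨-, -, h3⟩ ⟨-, -, h3'⟩
        omega
      have hcard : (Spaths L s0 (t+1) s).ncard
          = (Spaths L s0 t (s-1)).ncard + (Spaths L s0 t (s+1)).ncard := by
        rw [← Set.ncard_image_of_injOn key.injOn, key.image_eq,
          Set.ncard_union_eq hdisj (Spaths_finite L s0 t (s-1)) (Spaths_finite L s0 t (s+1))]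
      rw [hcard, cnt, if_pos hs]
      push_cast
      rw [ih (s-1), ih (s+1)]
    · have : Spaths L s0 (t+1) s = ∅ := by
        ext w
        simp only [Spaths, Set.mem_setOf_eq, Set.mem_empty_iff_false, iff_false]
        rintro ⟨-, h2, h3⟩
        exact hs (h3 ▸ h2 (t+1) le_rfl)
      rw [this, cnt, if_neg hs]
      simp

lemma cnt_eq_G (L : ℕ) (hL : 2 ≤ L) (s0 : ℤ) (hs0 : 0 < s0) (hs0L : s0 < (L:ℤ)) :
    ∀ (t : ℕ) (s r : ℤ), 0 ≤ s → s ≤ (L:ℤ) → 2*r = s - s0 + t →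
      cnt L s0 t s = G L s0 t r := by
  intro t
  induction t with
  | zero =>
    intro s r h0 h1 hr
    have hL' : (2:ℤ) ≤ L := by exact_mod_cast hL
    have hIcc : Finset.Icc (-((0:ℕ):ℤ)-1) (((0:ℕ):ℤ)+1) = {-1, 0, 1} := by
      ext x
      simp only [Finset.mem_Icc, Finset.mem_insert, Finset.mem_singleton]
      omega
    rw [cnt, G, hIcc]
    rw [Finset.sum_insert (by decide), Finset.sum_insert (by decide), Finset.sum_singleton]
    simp only [Cb_zero]
    push_cast at hr ⊢
    split_ifs <;> omega
  | succ t ih =>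
    intro s r h0 h1 hr
    have hL' : (2:ℤ) ≤ L := by exact_mod_cast hL
    push_cast at hr
    rw [cnt]
    by_cases hs : 0 < s ∧ s < (L:ℤ)
    · rw [if_pos hs, ih (s-1) (r-1) (by omega) (by omega) (by omega),
        ih (s+1) r (by omega) (by omega) (by omega),
        G_pascal L hL s0 hs0 hs0L t r (by omega) (by omega)]
      ring
    · rw [if_neg hs]
      have : s = 0 ∨ s = (L:ℤ) := by omega
      rcases this with rfl | rfl
      · exact (G_reflect0 L hL s0 hs0 hs0L (t+1) r (by push_cast; omega)).symm
      · exact (G_reflectL L hL s0 hs0 hs0L (t+1) r (by push_cast; omega)).symm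

/-- The number of ±1 paths of length `t` started at `s0` that stay in the
open interval `(0,L)` at all times `0 ≤ k ≤ t` and end at the interior state `s` at time
`t` equals the method-of-images expression. -/
theorem stmt_3 (L : ℕ) (hL : 2 ≤ L) (s0 : ℤ) (hs0 : 0 < s0) (hs0L : s0 < (L : ℤ))
    (t : ℕ) (s : ℤ) (hs0' : 0 < s) (hsL : s < (L : ℤ))
    (hpar : (2 : ℤ) ∣ (s - s0 + t))
    (r : ℤ) (hr : r = (s - s0 + t) / 2) :
    (Set.ncard {w : Fin t → ℤ | (∀ i, w i = 1 ∨ w i = -1) ∧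
        (∀ k ≤ t, 0 < pathPos s0 w k ∧ pathPos s0 w k < (L : ℤ)) ∧
        pathPos s0 w t = s} : ℤ)
      = ∑' k : ℤ, (Cb t (r + k * L) - Cb t (r + s0 + k * L)) := by
  have h2r : 2*r = s - s0 + t := by
    obtain ⟨m, hm⟩ := hpar
    omega
  have hset : {w : Fin t → ℤ | (∀ i, w i = 1 ∨ w i = -1) ∧
      (∀ k ≤ t, 0 < pathPos s0 w k ∧ pathPos s0 w k < (L : ℤ)) ∧
      pathPos s0 w t = s} = Spaths L s0 t s := rfl
  rw [hset, ncard_Spaths L s0 hs0 hs0L t s,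
    cnt_eq_G L hL s0 hs0 hs0L t s r (by omega) (by omega) h2r, G]
  refine (tsum_eq_sum fun k hk => ?_).symm
  simp only [Finset.mem_Icc, not_and_or, not_le] at hk
  have hv := both_vanish L hL s0 hs0 hs0L t r k (by omega) (by omega)
    (by rcases abs_cases k with ⟨h', _⟩ | ⟨h', _⟩ <;> omega)
  rw [hv.1, hv.2]
  ring
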